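/- Outer product formula: if d − k is even and X ∈ T^k(n), Y ∈ T^{d−k}(n), then det(X ⊗ Y) = det(X) · det(Y) · n!, where (X ⊗ Y)(i_1,...,i_d) = X(i_1,...,i_k)·Y(i_{k+1},...,i_d). -/

import Mathlib

open Finset

variable {F : Type*}

section Defs
variable [CommRing F] {d n : ℕ}

/-- Cayley's first hyperdeterminant. -/
def hdet [NeZero d] (T : (Fin d → Fin n) → F) : F :=
  ∑ σ : Fin d → Equiv.Perm (Fin n),
    if σ 0 = 1 then
      ((((∏ ℓ, Equiv.Perm.sign (σ ℓ)) : ℤˣ) : ℤ) : F) * ∏ i, T (fun ℓ => σ ℓ i)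
    else 0

/-- The diagonal identity tensor. -/
def diagT [NeZero d] : (Fin d → Fin n) → F :=
  fun i => if ∀ ℓ, i ℓ = i 0 then 1 else 0

/-- The set of natural numbers `r` such that `T` decomposes as a sum of `r`
tensors from `S`. -/
def Decomps (S : Set ((Fin d → Fin n) → F)) (T : (Fin d → Fin n) → F) : Set ℕ :=
  {r | ∃ c : Fin r → ((Fin d → Fin n) → F), (∀ ℓ, c ℓ ∈ S) ∧ ∑ ℓ, c ℓ = T}

/-- The rank function associated to a set `S` of simple tensors. -/
noncomputable def rankS (S : Set ((Fin d → Fin n) → F)) (T : (Fin d → Fin n) → F) : ℕ :=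
  sInf (Decomps S T)

/-- `T` depends only on the coordinates in `A`. -/
def DependsOnlyOn (A : Set (Fin d)) (T : (Fin d → Fin n) → F) : Prop :=
  ∀ i j : Fin d → Fin n, (∀ ℓ ∈ A, i ℓ = j ℓ) → T i = T j

/-- Simple tensors for the tensor rank: fully decomposable tensors. -/
def tensorSimple : Set ((Fin d → Fin n) → F) :=
  {T | ∃ v : Fin d → (Fin n → F), (∀ ℓ, v ℓ ≠ 0) ∧ T = fun i => ∏ ℓ, v ℓ (i ℓ)}

/-- Simple tensors for the slice rank: decomposable along some coordinate. -/
def sliceSimple : Set ((Fin d → Fin n) → F) :=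
  {T | ∃ (k : Fin d) (v : Fin n → F) (T₁ : (Fin d → Fin n) → F),
    v ≠ 0 ∧ DependsOnlyOn {k}ᶜ T₁ ∧ T = fun i => v (i k) * T₁ i}

/-- Simple tensors for the partition rank: decomposable with respect to a
set partition of the coordinates into two nonempty blocks. -/
def partitionSimple : Set ((Fin d → Fin n) → F) :=
  {T | ∃ (A : Set (Fin d)) (T₁ T₂ : (Fin d → Fin n) → F),
    A.Nonempty ∧ Aᶜ.Nonempty ∧ T₁ ≠ 0 ∧ T₂ ≠ 0 ∧
    DependsOnlyOn A T₁ ∧ DependsOnlyOn Aᶜ T₂ ∧ T = fun i => T₁ i * T₂ i}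

/-- Simple tensors for the odd partition rank: decomposable with respect to a
set partition of the coordinates with one block `B` of odd size not containing
the first coordinate. -/
def oddPartitionSimple [NeZero d] : Set ((Fin d → Fin n) → F) :=
  {T | ∃ (B : Finset (Fin d)) (T₁ T₂ : (Fin d → Fin n) → F),
    Odd B.card ∧ (0 : Fin d) ∉ B ∧ T₁ ≠ 0 ∧ T₂ ≠ 0 ∧
    DependsOnlyOn (↑Bᶜ) T₁ ∧ DependsOnlyOn (↑B) T₂ ∧ T = fun i => T₁ i * T₂ i}

/-- The multilinear product `(A_1, …, A_d) ⬝ T`, expressing a change of basis. -/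
def mprod (A : Fin d → Matrix (Fin n) (Fin n) F) (T : (Fin d → Fin n) → F) :
    (Fin d → Fin n) → F :=
  fun i => ∑ j : Fin d → Fin n, (∏ ℓ, A ℓ (i ℓ) (j ℓ)) * T j

/-- The subtensor of `T` given by index maps `e`. -/
def subT {m : ℕ} (T : (Fin d → Fin n) → F) (e : Fin d → (Fin m → Fin n)) :
    (Fin d → Fin m) → F :=
  fun j => T fun ℓ => e ℓ (j ℓ)

/-- `T` is `k`-null: all `k × ⋯ × k` hyperdeterminant minors of `T` vanish. -/
def kNull [NeZero d] (k : ℕ) (T : (Fin d → Fin n) → F) : Prop :=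
  ∀ e : Fin d → (Fin k → Fin n), (∀ ℓ, StrictMono (e ℓ)) → hdet (subT T e) = 0

end Defs

/-!
Split a tuple of `k + m` permutations into its first `k` and last `m` entries. The
normalisation `σ 0 = 1` of the hyperdeterminant only constrains the first block, so the
sum over the last block is unrestricted; for `m` even, right-multiplying all `m`
permutations by a common `π` changes neither the sign (`sign π ^ m = 1`) nor the product
(it reorders its factors), so this unrestricted sum is `n!` copies of `hdet Y`.
-/

section
variable [CommRing F] {d k m n : ℕ}

def hdetTerm (T : (Fin d → Fin n) → F) (σ : Fin d → Equiv.Perm (Fin n)) : F :=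
  ((((∏ ℓ, Equiv.Perm.sign (σ ℓ)) : ℤˣ) : ℤ) : F) * ∏ i, T (fun ℓ => σ ℓ i)

def outerT (X : (Fin k → Fin n) → F) (Y : (Fin m → Fin n) → F) :
    (Fin (k + m) → Fin n) → F :=
  fun i => X (fun a => i (Fin.castAdd m a)) * Y (fun b => i (Fin.natAdd k b))

theorem hdet_eq_sum_ite [NeZero d] (T : (Fin d → Fin n) → F) :
    hdet T = ∑ σ : Fin d → Equiv.Perm (Fin n), if σ 0 = 1 then hdetTerm T σ else 0 :=
  rfl

theorem hdetTerm_mul_right (hd : Even d) (T : (Fin d → Fin n) → F)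
    (σ : Fin d → Equiv.Perm (Fin n)) (π : Equiv.Perm (Fin n)) :
    hdetTerm T (fun ℓ => σ ℓ * π) = hdetTerm T σ := by
  have hsign : ∏ ℓ, Equiv.Perm.sign (σ ℓ * π) = ∏ ℓ, Equiv.Perm.sign (σ ℓ) := by
    rw [prod_congr rfl fun ℓ _ => map_mul _ (σ ℓ) π, prod_mul_distrib, prod_const, card_univ,
      Fintype.card_fin, Int.units_pow_eq_pow_mod_two, Nat.even_iff.mp hd, pow_zero, mul_one]
  rw [hdetTerm, hdetTerm, hsign]
  exact congrArg _ (Equiv.prod_comp π fun i => T fun ℓ => σ ℓ i)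

theorem hdet_eq_sum_ite_eq [NeZero d] (hd : Even d) (T : (Fin d → Fin n) → F)
    (π : Equiv.Perm (Fin n)) :
    hdet T = ∑ σ : Fin d → Equiv.Perm (Fin n), if σ 0 = π then hdetTerm T σ else 0 := by
  rw [hdet_eq_sum_ite]
  refine Fintype.sum_equiv (Equiv.piCongrRight fun _ => Equiv.mulRight π) _ _ fun σ => ?_
  change _ = if σ 0 * π = π then hdetTerm T (fun ℓ => σ ℓ * π) else 0
  simp only [mul_eq_right, hdetTerm_mul_right hd]

theorem sum_hdetTerm [NeZero d] (hd : Even d) (T : (Fin d → Fin n) → F) :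
    ∑ σ : Fin d → Equiv.Perm (Fin n), hdetTerm T σ = hdet T * (n.factorial : F) := by
  calc ∑ σ : Fin d → Equiv.Perm (Fin n), hdetTerm T σ
      = ∑ π : Equiv.Perm (Fin n), ∑ σ : Fin d → Equiv.Perm (Fin n),
          if σ 0 = π then hdetTerm T σ else 0 := by
        rw [sum_comm]
        simp only [sum_ite_eq, mem_univ, if_true]
    _ = ∑ _π : Equiv.Perm (Fin n), hdet T := by
        simp only [← hdet_eq_sum_ite_eq hd]
    _ = hdet T * (n.factorial : F) := by
        rw [sum_const, card_univ, Fintype.card_perm, Fintype.card_fin, nsmul_eq_mul, mul_comm]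

theorem hdetTerm_outerT_append (X : (Fin k → Fin n) → F) (Y : (Fin m → Fin n) → F)
    (σ₁ : Fin k → Equiv.Perm (Fin n)) (σ₂ : Fin m → Equiv.Perm (Fin n)) :
    hdetTerm (outerT X Y) (Fin.append σ₁ σ₂) = hdetTerm X σ₁ * hdetTerm Y σ₂ := by
  simp only [hdetTerm, outerT, Fin.prod_univ_add, Fin.append_left, Fin.append_right,
    prod_mul_distrib, Units.val_mul, Int.cast_mul]
  ring

theorem hdet_outerT [NeZero k] [NeZero m] [NeZero (k + m)] (hm : Even m)
    (X : (Fin k → Fin n) → F) (Y : (Fin m → Fin n) → F) :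
    hdet (outerT X Y) = hdet X * hdet Y * (n.factorial : F) := by
  calc hdet (outerT X Y)
      = ∑ σ : Fin (k + m) → Equiv.Perm (Fin n),
          if σ 0 = 1 then hdetTerm (outerT X Y) σ else 0 := hdet_eq_sum_ite _
    _ = ∑ σ : (Fin k → Equiv.Perm (Fin n)) × (Fin m → Equiv.Perm (Fin n)),
          if σ.1 0 = 1 then hdetTerm X σ.1 * hdetTerm Y σ.2 else 0 := by
        refine (Fintype.sum_equiv (Fin.appendEquiv k m) _ _ fun ⟨σ₁, σ₂⟩ => ?_).symm
        change _ = if Fin.append σ₁ σ₂ (Fin.castAdd m 0) = 1 then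
          hdetTerm (outerT X Y) (Fin.append σ₁ σ₂) else 0
        rw [Fin.append_left, hdetTerm_outerT_append]
    _ = hdet X * ∑ σ₂ : Fin m → Equiv.Perm (Fin n), hdetTerm Y σ₂ := by
        simp only [Fintype.sum_prod_type, ← ite_zero_mul, ← mul_sum, ← sum_mul]
        rfl
    _ = hdet X * hdet Y * (n.factorial : F) := by
        rw [sum_hdetTerm hm, mul_assoc]

end

/-- the outer product formula
`det(X ⊗ Y) = det(X) ⋅ det(Y) ⋅ n!` when the number of coordinates of `Y`
is even. -/
theorem hdet_outer_product [Field F] {k m n : ℕ} [NeZero k] [NeZero m]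
    [NeZero (k + m)] (hm : Even m)
    (X : (Fin k → Fin n) → F) (Y : (Fin m → Fin n) → F) :
    hdet (fun i : Fin (k + m) → Fin n =>
        X (fun a => i (Fin.castAdd m a)) * Y (fun b => i (Fin.natAdd k b))) =
      hdet X * hdet Y * (Nat.factorial n : F) :=
  hdet_outerT hm X Y
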